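/- arXiv:1807.07307 — 6 statements merged into one kernel-verified Lean document; each statement's English description precedes it below -/
import Mathlib

section
/- Let B₁, …, B_m be arbitrary n×n complex matrices, and for each r write B_r = B_r¹ + B_r², where B_r¹ = (B_r + B_r*)/2 is the Hermitian part and B_r² = (B_r − B_r*)/2 is the skew-Hermitian part. Then ∑_{r,s=1}^m ‖[B_r, B_s]‖² = ∑_{r,s=1}^m ∑_{i,j=1}^2 ‖[B_r^i, B_s^j]‖² − 2 ‖∑_{r=1}^m [B_r¹, B_r²]‖². -/
open scoped BigOperators
open Matrix

/-- Squared Frobenius norm of a matrix: `‖A‖² = ∑ i j, ‖A i j‖²`. -/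
noncomputable def frobSq {ι κ α : Type*} [Fintype ι] [Fintype κ] [Norm α]
    (A : Matrix ι κ α) : ℝ :=
  ∑ i, ∑ j, ‖A i j‖ ^ 2

private lemma rot4 {k : ℕ} (x y z t : Matrix (Fin k) (Fin k) ℂ) :
    Matrix.trace (x*(y*(z*t))) = Matrix.trace (y*(z*(t*x))) := by
  rw [Matrix.trace_mul_comm, mul_assoc, mul_assoc]

private lemma frobSq_trace {k : ℕ} (A : Matrix (Fin k) (Fin k) ℂ) :
    frobSq A = (Matrix.trace (A * Aᴴ)).re := by
  unfold frobSq
  simp only [Matrix.trace, Matrix.diag, Matrix.mul_apply, Matrix.conjTranspose_apply,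
    Complex.re_sum]
  refine Finset.sum_congr rfl fun i _ => Finset.sum_congr rfl fun j _ => ?_
  rw [show star (A i j) = (starRingEnd ℂ) (A i j) from rfl, Complex.mul_conj,
    Complex.ofReal_re, ← Complex.sq_norm]

private lemma pointwise {k : ℕ} (a b c d : Matrix (Fin k) (Fin k) ℂ)
    (ha : aᴴ = a) (hb : bᴴ = b) (hc : cᴴ = -c) (hd : dᴴ = -d) :
    Matrix.trace (((a+c)*(b+d) - (b+d)*(a+c)) * ((a+c)*(b+d) - (b+d)*(a+c))ᴴ)
      = (Matrix.trace ((a*b - b*a) * (a*b - b*a)ᴴ)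
          + Matrix.trace ((a*d - d*a) * (a*d - d*a)ᴴ)
          + Matrix.trace ((c*b - b*c) * (c*b - b*c)ᴴ)
          + Matrix.trace ((c*d - d*c) * (c*d - d*c)ᴴ))
        - 2 * Matrix.trace ((a*c - c*a) * (b*d - d*b)ᴴ) := by
  simp only [Matrix.conjTranspose_sub, Matrix.conjTranspose_mul, Matrix.conjTranspose_add,
    ha, hb, hc, hd]
  simp only [mul_add, add_mul, mul_sub, sub_mul, mul_neg, neg_mul, neg_neg, neg_sub,
    Matrix.trace_add, Matrix.trace_sub, Matrix.trace_neg, Matrix.mul_assoc]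
  linear_combination (-1:ℂ) * (((rot4 a b d a).trans (rot4 b d a a)).trans (rot4 d a a b)) + (-1:ℂ) * ((rot4 a d a b).trans (rot4 d a b a)) + (((rot4 a d b a).trans (rot4 d b a a)).trans (rot4 b a a d)) + (-1:ℂ) * (rot4 b a a d) + (rot4 b a b c) + (-1:ℂ) * (rot4 b a c b) + (rot4 b a c d) + (((rot4 b a d a).trans (rot4 a d a b)).trans (rot4 d a b a)) + (-1:ℂ) * (rot4 b a d c) + ((rot4 b c a b).trans (rot4 c a b b)) + (-1:ℂ) * ((rot4 b c a d).trans (rot4 c a d b)) + (-1:ℂ) * (((rot4 b c b a).trans (rot4 c b a b)).trans (rot4 b a b c)) + (((rot4 b c d a).trans (rot4 c d a b)).trans (rot4 d a b c)) + (-2:ℂ) * (rot4 c a b d) + (2:ℂ) * (rot4 c a d b) + (-1:ℂ) * ((rot4 c b a b).trans (rot4 b a b c)) + ((rot4 c b a d).trans (rot4 b a d c)) + (((rot4 c b b a).trans (rot4 b b a c)).trans (rot4 b a c b)) + (-1:ℂ) * (rot4 c b c d) + (-1:ℂ) * (((rot4 c b d a).trans (rot4 b d a c)).trans (rot4 d a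 c b)) + (rot4 c b d c) + (-1:ℂ) * ((rot4 c d a b).trans (rot4 d a b c)) + ((rot4 c d a d).trans (rot4 d a d c)) + (((rot4 c d b a).trans (rot4 d b a c)).trans (rot4 b a c d)) + (-1:ℂ) * ((rot4 c d b c).trans (rot4 d b c c)) + (((rot4 c d c b).trans (rot4 d c b c)).trans (rot4 c b c d)) + (-1:ℂ) * (((rot4 c d d a).trans (rot4 d d a c)).trans (rot4 d a c d)) + (rot4 d a a b) + (-1:ℂ) * (rot4 d a b a) + (rot4 d a b c) + (-1:ℂ) * (rot4 d a c b) + (rot4 d a c d) + (-1:ℂ) * (rot4 d a d c) + ((rot4 d c a b).trans (rot4 c a b d)) + (-1:ℂ) * ((rot4 d c a d).trans (rot4 c a d d)) + (-1:ℂ) * (((rot4 d c b a).trans (rot4 c b a d)).trans (rot4 b a d c)) + ((rot4 d c b c).trans (rot4 c b c d)) + (-1:ℂ) * (((rot4 d c c b).trans (rot4 c c b d)).trans (rot4 c b d c)) + (((rot4 d c d a).trans (rot4 c d a d)).trans (rot4 d a d c))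

/-- Decomposition identity for commutators of complex matrices split into
Hermitian parts `H r = (B r + B rᴴ)/2` and skew-Hermitian parts `S r = (B r - B rᴴ)/2`. -/
theorem commutator_decomposition (n m : ℕ)
    (B H S : Fin m → Matrix (Fin n) (Fin n) ℂ)
    (hH : ∀ r, H r = (2⁻¹ : ℂ) • (B r + (B r)ᴴ))
    (hS : ∀ r, S r = (2⁻¹ : ℂ) • (B r - (B r)ᴴ)) :
    ∑ r, ∑ s, frobSq (B r * B s - B s * B r) =
      (∑ r, ∑ s,
        (frobSq (H r * H s - H s * H r) + frobSq (H r * S s - S s * H r) +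
          frobSq (S r * H s - H s * S r) + frobSq (S r * S s - S s * S r))) -
        2 * frobSq (∑ r, (H r * S r - S r * H r)) := by
  have hB : ∀ r, B r = H r + S r := by
    intro r; rw [hH, hS]; module
  have hHh : ∀ r, (H r)ᴴ = H r := by
    intro r; rw [hH]
    simp [Matrix.conjTranspose_smul, Matrix.conjTranspose_add, add_comm]
  have hSh : ∀ r, (S r)ᴴ = -(S r) := by
    intro r; rw [hS]
    simp [Matrix.conjTranspose_smul, Matrix.conjTranspose_sub, smul_sub, neg_sub]
  have key : (∑ r, ∑ s, Matrix.trace ((B r * B s - B s * B r) * (B r * B s - B s * B r)ᴴ))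
      = (∑ r, ∑ s,
          (Matrix.trace ((H r * H s - H s * H r) * (H r * H s - H s * H r)ᴴ)
            + Matrix.trace ((H r * S s - S s * H r) * (H r * S s - S s * H r)ᴴ)
            + Matrix.trace ((S r * H s - H s * S r) * (S r * H s - H s * S r)ᴴ)
            + Matrix.trace ((S r * S s - S s * S r) * (S r * S s - S s * S r)ᴴ)))
        - 2 * Matrix.trace ((∑ r, (H r * S r - S r * H r)) *
            (∑ r, (H r * S r - S r * H r))ᴴ) := by
    have expand : Matrix.trace ((∑ r, (H r * S r - S r * H r)) *
        (∑ r, (H r * S r - S r * H r))ᴴ)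
        = ∑ r, ∑ s, Matrix.trace ((H r * S r - S r * H r) * (H s * S s - S s * H s)ᴴ) := by
      rw [Matrix.conjTranspose_sum, Finset.sum_mul]
      rw [Matrix.trace_sum]
      refine Finset.sum_congr rfl fun r _ => ?_
      rw [Finset.mul_sum, Matrix.trace_sum]
    rw [expand, Finset.mul_sum, ← Finset.sum_sub_distrib]
    refine Finset.sum_congr rfl fun r _ => ?_
    rw [Finset.mul_sum, ← Finset.sum_sub_distrib]
    refine Finset.sum_congr rfl fun s _ => ?_
    rw [hB r, hB s]
    exact pointwise (H r) (H s) (S r) (S s) (hHh r) (hHh s) (hSh r) (hSh s)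
  have := congrArg Complex.re key
  simp only [frobSq_trace, Complex.re_sum, Complex.sub_re, Complex.add_re, Complex.mul_re,
    Complex.re_ofNat, Complex.im_ofNat, zero_mul, sub_zero] at this ⊢
  exact this
end

section
/- Let m ≥ 3 and let B₁, …, B_m be 3×3 complex skew-symmetric matrices (B_rᵗ = −B_r). Then ∑_{r,s=1}^m ‖[B_r, B_s]‖² ≤ (1/3) (∑_{r=1}^m ‖B_r‖²)². -/
open scoped BigOperators
open Matrix

open Complex

lemma lagrange_aux (a b c a' b' c' : ℂ) :
    normSq (-(b * c') + b' * c) + normSq (a * c' - a' * c) + normSq (a' * b - a * b')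
      + normSq (a * (starRingEnd ℂ) a' + b * (starRingEnd ℂ) b' + c * (starRingEnd ℂ) c')
    = (normSq a + normSq b + normSq c) * (normSq a' + normSq b' + normSq c') := by
  simp only [Complex.normSq_apply, Complex.add_re, Complex.add_im, Complex.mul_re,
    Complex.mul_im, Complex.sub_re, Complex.sub_im, Complex.neg_re, Complex.neg_im,
    Complex.conj_re, Complex.conj_im]
  ring

lemma sum4_comm_aux {m : ℕ} (F : Fin m → Fin m → Fin 3 → Fin 3 → ℂ) :
    ∑ r, ∑ s, ∑ i, ∑ j, F r s i j = ∑ i, ∑ j, ∑ r, ∑ s, F r s i j := by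
  have h1 : ∀ r : Fin m, ∑ s, ∑ i, ∑ j, F r s i j = ∑ i, ∑ j, ∑ s, F r s i j := by
    intro r
    rw [Finset.sum_comm]
    exact Finset.sum_congr rfl fun i _ => Finset.sum_comm
  simp only [h1]
  rw [Finset.sum_comm]
  exact Finset.sum_congr rfl fun i _ => Finset.sum_comm

lemma gram_lower_aux {m : ℕ} (u : Fin m → Fin 3 → ℂ) :
    (1/3) * (∑ r, ∑ i, normSq (u r i)) ^ 2 ≤
      ∑ r, ∑ s, normSq (∑ i, u r i * (starRingEnd ℂ) (u s i)) := by
  set H : Fin 3 → Fin 3 → ℂ := fun i j => ∑ r, u r i * (starRingEnd ℂ) (u r j) with hH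
  have hc : (∑ r, ∑ s, (∑ i, u r i * (starRingEnd ℂ) (u s i)) *
        (starRingEnd ℂ) (∑ i, u r i * (starRingEnd ℂ) (u s i)))
      = ∑ i, ∑ j, H i j * (starRingEnd ℂ) (H i j) := by
    simp only [map_sum, _root_.map_mul, Complex.conj_conj, hH]
    simp only [Finset.sum_mul_sum]
    rw [sum4_comm_aux]
    refine Finset.sum_congr rfl fun i _ => Finset.sum_congr rfl fun j _ =>
      Finset.sum_congr rfl fun r _ => Finset.sum_congr rfl fun s _ => by ring
  have key : (∑ r, ∑ s, normSq (∑ i, u r i * (starRingEnd ℂ) (u s i)))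
      = ∑ i, ∑ j, normSq (H i j) := by
    have h1 : ∀ z : ℂ, normSq z = (z * (starRingEnd ℂ) z).re := by
      intro z; rw [Complex.mul_conj]; simp
    simp only [h1]
    have := congrArg Complex.re hc
    simpa [Complex.re_sum] using this
  rw [key]
  have hdiag : ∀ i, normSq (H i i) = (∑ r, normSq (u r i)) ^ 2 := by
    intro i
    have hr : H i i = ((∑ r, normSq (u r i) : ℝ) : ℂ) := by
      simp [hH, Complex.mul_conj]
    rw [hr, Complex.normSq_ofReal]; ring
  rw [Finset.sum_comm]
  simp only [Fin.sum_univ_three]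
  rw [hdiag 0, hdiag 1, hdiag 2]
  nlinarith [Complex.normSq_nonneg (H 0 1), Complex.normSq_nonneg (H 0 2),
    Complex.normSq_nonneg (H 1 0), Complex.normSq_nonneg (H 1 2),
    Complex.normSq_nonneg (H 2 0), Complex.normSq_nonneg (H 2 1),
    sq_nonneg (∑ r, normSq (u r 0) - ∑ r, normSq (u r 1)),
    sq_nonneg (∑ r, normSq (u r 0) - ∑ r, normSq (u r 2)),
    sq_nonneg (∑ r, normSq (u r 1) - ∑ r, normSq (u r 2))]

lemma skew_data_aux (A : Matrix (Fin 3) (Fin 3) ℂ) (h : Aᵀ = -A) :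
    A 0 0 = 0 ∧ A 1 1 = 0 ∧ A 2 2 = 0 ∧ A 1 0 = -A 0 1 ∧ A 2 0 = -A 0 2 ∧ A 2 1 = -A 1 2 := by
  have e : ∀ i j, A j i = -A i j := by
    intro i j
    have := congrFun (congrFun h i) j
    simpa [Matrix.transpose_apply, Matrix.neg_apply] using this
  refine ⟨?_, ?_, ?_, e 0 1, e 0 2, e 1 2⟩
  · linear_combination (1/2 : ℂ) * e 0 0
  · linear_combination (1/2 : ℂ) * e 1 1
  · linear_combination (1/2 : ℂ) * e 2 2

lemma frobSq_skew_aux (A : Matrix (Fin 3) (Fin 3) ℂ) (h : Aᵀ = -A) :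
    frobSq A = 2 * (normSq (A 0 1) + normSq (A 0 2) + normSq (A 1 2)) := by
  obtain ⟨h00, h11, h22, h10, h20, h21⟩ := skew_data_aux A h
  simp only [frobSq, Fin.sum_univ_three, h00, h11, h22, h10, h20, h21]
  simp only [Complex.sq_norm, normSq_neg, normSq_zero]
  ring

/-- DDVV-type inequality for `3×3` complex skew-symmetric matrices, `m ≥ 3`. -/
theorem ddvv_complex_skew_three (m : ℕ) (hm : 3 ≤ m)
    (B : Fin m → Matrix (Fin 3) (Fin 3) ℂ)
    (hB : ∀ r, (B r)ᵀ = -(B r)) :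
    ∑ r, ∑ s, frobSq (B r * B s - B s * B r) ≤
      (1 / 3) * (∑ r, frobSq (B r)) ^ 2 := by
  classical
  set u : Fin m → Fin 3 → ℂ := fun r => ![B r 0 1, B r 0 2, B r 1 2] with hu
  have hd := fun r => skew_data_aux (B r) (hB r)
  have hcommskew : ∀ r s, (B r * B s - B s * B r)ᵀ = -(B r * B s - B s * B r) := by
    intro r s
    rw [Matrix.transpose_sub, Matrix.transpose_mul, Matrix.transpose_mul, hB r, hB s]
    simp only [Matrix.neg_mul, Matrix.mul_neg, neg_neg]
    rw [neg_sub]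
  have hcomm : ∀ r s, frobSq (B r * B s - B s * B r) =
      2 * ((∑ i, normSq (u r i)) * (∑ i, normSq (u s i))
        - normSq (∑ i, u r i * (starRingEnd ℂ) (u s i))) := by
    intro r s
    obtain ⟨hr00, hr11, hr22, hr10, hr20, hr21⟩ := hd r
    obtain ⟨hs00, hs11, hs22, hs10, hs20, hs21⟩ := hd s
    rw [frobSq_skew_aux _ (hcommskew r s)]
    have e01 : (B r * B s - B s * B r) 0 1
        = -(B r 0 2 * B s 1 2) + B s 0 2 * B r 1 2 := by
      simp only [Matrix.sub_apply, Matrix.mul_apply, Fin.sum_univ_three,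
        hr00, hr11, hr22, hr10, hr20, hr21, hs00, hs11, hs22, hs10, hs20, hs21]
      ring
    have e02 : (B r * B s - B s * B r) 0 2
        = B r 0 1 * B s 1 2 - B s 0 1 * B r 1 2 := by
      simp only [Matrix.sub_apply, Matrix.mul_apply, Fin.sum_univ_three,
        hr00, hr11, hr22, hr10, hr20, hr21, hs00, hs11, hs22, hs10, hs20, hs21]
      ring
    have e12 : (B r * B s - B s * B r) 1 2
        = B s 0 1 * B r 0 2 - B r 0 1 * B s 0 2 := by
      simp only [Matrix.sub_apply, Matrix.mul_apply, Fin.sum_univ_three,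
        hr00, hr11, hr22, hr10, hr20, hr21, hs00, hs11, hs22, hs10, hs20, hs21]
      ring
    rw [e01, e02, e12]
    simp only [hu, Fin.sum_univ_three, Matrix.cons_val_zero, Matrix.cons_val_one,
      Matrix.head_cons, Matrix.cons_val_two, Matrix.tail_cons]
    linear_combination 2 * lagrange_aux (B r 0 1) (B r 0 2) (B r 1 2) (B s 0 1) (B s 0 2) (B s 1 2)
  have hfrob : ∀ r, frobSq (B r) = 2 * ∑ i, normSq (u r i) := by
    intro r
    rw [frobSq_skew_aux _ (hB r)]
    simp only [hu, Fin.sum_univ_three, Matrix.cons_val_zero, Matrix.cons_val_one,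
      Matrix.head_cons, Matrix.cons_val_two, Matrix.tail_cons]
  set N : ℝ := ∑ r, ∑ i, normSq (u r i) with hN
  set Q : ℝ := ∑ r, ∑ s, normSq (∑ i, u r i * (starRingEnd ℂ) (u s i)) with hQ
  have hL : ∑ r, ∑ s, frobSq (B r * B s - B s * B r) = 2 * (N * N) - 2 * Q := by
    simp only [hcomm, mul_sub, Finset.sum_sub_distrib, ← Finset.mul_sum, hQ, hN]
    rw [← Finset.sum_mul]
  have hR : ∑ r, frobSq (B r) = 2 * N := by
    simp only [hfrob, ← Finset.mul_sum, hN]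
  rw [hL, hR]
  have hg := gram_lower_aux u
  rw [← hN, ← hQ] at hg
  nlinarith [hg]
end

section
/- Let X, Y be n×n quaternionic matrices. Then ‖XY‖ = ‖X‖ ‖Y‖ holds if and only if either ‖X‖‖Y‖ = 0, or there exist column vectors a, b ∈ ℍⁿ and a unit column vector u ∈ ℍⁿ (i.e. ∑_j ‖u_j‖² = 1) such that X = a u* and Y = u b*, where u* and b* denote the quaternionic conjugate transposes (row vectors with entries the quaternion conjugates). -/
open scoped BigOperators Quaternion RealInnerProductSpace

section Aux

lemma quat_re_mul_comm (a b : ℍ[ℝ]) : (a*b).re = (b*a).re := by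
  rw [Quaternion.re_mul, Quaternion.re_mul]; ring

lemma quat_re_sum {n : ℕ} (f : Fin n → ℍ[ℝ]) : (∑ j, f j).re = ∑ j, (f j).re :=
  map_sum (QuaternionAlgebra.reₗ (-1 : ℝ) (0 : ℝ) (-1 : ℝ)) f Finset.univ

lemma quat_star_smul (r : ℝ) (a : ℍ[ℝ]) : star (r • a) = r • star a := by
  ext <;> simp

lemma quat_norm_sq_eq (a : ℍ[ℝ]) : ‖a‖^2 = Quaternion.normSq a := by
  rw [Quaternion.normSq_eq_norm_mul_self, sq]

lemma quat_key {n : ℕ} (x y : Fin n → ℍ[ℝ]) (t : ℍ[ℝ]) :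
    ∑ j, ‖y j - star (x j) * t‖^2
      = (∑ j, ‖y j‖^2) - 2 * (((∑ j, x j * y j) * star t).re)
        + (∑ j, ‖x j‖^2) * ‖t‖^2 := by
  have term : ∀ j, ‖y j - star (x j) * t‖^2
      = ‖y j‖^2 - 2 * ((x j * y j * star t).re) + ‖x j‖^2 * ‖t‖^2 := by
    intro j
    rw [norm_sub_sq_real]
    have h1 : ⟪y j, star (x j) * t⟫ = (x j * y j * star t).re := by
      rw [Quaternion.inner_def, star_mul, star_star]
      calc (y j * (star t * x j)).re = ((y j * star t) * x j).re := by rw [mul_assoc]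
        _ = (x j * (y j * star t)).re := (quat_re_mul_comm _ _)
        _ = (x j * y j * star t).re := by rw [mul_assoc]
    rw [h1, norm_mul, norm_star, mul_pow]
  have hre : ((∑ j, x j * y j) * star t).re = ∑ j, (x j * y j * star t).re := by
    rw [Finset.sum_mul, quat_re_sum]
  rw [Finset.sum_congr rfl (fun j _ => term j), Finset.sum_add_distrib,
    Finset.sum_sub_distrib, ← Finset.sum_mul, ← Finset.mul_sum, hre]

lemma quat_eval_key {n : ℕ} (x y : Fin n → ℍ[ℝ]) (hx : (∑ j, ‖x j‖^2) ≠ 0) :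
    ∑ j, ‖y j - star (x j) * (((∑ j, ‖x j‖^2)⁻¹ : ℝ) * ∑ j, x j * y j)‖^2
      = (∑ j, ‖y j‖^2) - (∑ j, ‖x j‖^2)⁻¹ * ‖∑ j, x j * y j‖^2 := by
  set X2 := (∑ j, ‖x j‖^2) with hX2
  set s := ∑ j, x j * y j with hs
  rw [quat_key]
  have h1 : (s * star ((X2⁻¹ : ℝ) * s)).re = X2⁻¹ * ‖s‖^2 := by
    rw [star_mul, Quaternion.star_coe, ← mul_assoc, Quaternion.mul_coe_eq_smul]
    have h2 : (s * star s) = ((‖s‖^2 : ℝ) : ℍ[ℝ]) := by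
      rw [Quaternion.self_mul_star]
      rw [Quaternion.normSq_eq_norm_mul_self, sq]
    rw [Quaternion.re_smul, h2, Quaternion.re_coe, smul_eq_mul]
  have h2 : ‖((X2⁻¹ : ℝ) : ℍ[ℝ]) * s‖^2 = X2⁻¹^2 * ‖s‖^2 := by
    rw [norm_mul, mul_pow, Quaternion.norm_coe, Real.norm_eq_abs, sq_abs]
  rw [h1, h2]
  field_simp
  ring

lemma quat_cs_ineq {n : ℕ} (x y : Fin n → ℍ[ℝ]) :
    ‖∑ j, x j * y j‖^2 ≤ (∑ j, ‖x j‖^2) * (∑ j, ‖y j‖^2) := by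
  by_cases hx : (∑ j, ‖x j‖^2) = 0
  · have : ∀ j, x j = 0 := by
      intro j
      have := (Finset.sum_eq_zero_iff_of_nonneg (fun j _ => sq_nonneg ‖x j‖)).1 hx j
        (Finset.mem_univ j)
      simpa [pow_eq_zero_iff] using this
    simp [this, hx]
  · have h := quat_eval_key x y hx
    have hnn : 0 ≤ ∑ j, ‖y j - star (x j) * (((∑ j, ‖x j‖^2)⁻¹ : ℝ) * ∑ j, x j * y j)‖^2 :=
      Finset.sum_nonneg fun j _ => sq_nonneg _
    rw [h] at hnn
    have hX2pos : 0 < ∑ j, ‖x j‖^2 :=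
      lt_of_le_of_ne (Finset.sum_nonneg fun j _ => sq_nonneg _) (Ne.symm hx)
    calc ‖∑ j, x j * y j‖^2 = (∑ j, ‖x j‖^2) * ((∑ j, ‖x j‖^2)⁻¹ * ‖∑ j, x j * y j‖^2) := by
          field_simp
      _ ≤ (∑ j, ‖x j‖^2) * (∑ j, ‖y j‖^2) :=
          mul_le_mul_of_nonneg_left (by linarith) hX2pos.le

lemma quat_cs_eq {n : ℕ} (x y : Fin n → ℍ[ℝ]) (hx : (∑ j, ‖x j‖^2) ≠ 0)
    (h : ‖∑ j, x j * y j‖^2 = (∑ j, ‖x j‖^2) * (∑ j, ‖y j‖^2)) :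
    ∃ q : ℍ[ℝ], ∀ j, y j = star (x j) * q := by
  refine ⟨((∑ j, ‖x j‖^2)⁻¹ : ℝ) * ∑ j, x j * y j, fun j => ?_⟩
  have hk := quat_eval_key x y hx
  rw [h, inv_mul_cancel_left₀ hx] at hk
  have hz := (Finset.sum_eq_zero_iff_of_nonneg
    (fun j _ => sq_nonneg (‖y j - star (x j) * (((∑ j, ‖x j‖^2)⁻¹ : ℝ) * ∑ j, x j * y j)‖))).1
    (by rw [hk]; ring) j (Finset.mem_univ j)
  rw [pow_eq_zero_iff (by norm_num), norm_eq_zero, sub_eq_zero] at hz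
  exact hz

lemma quat_cs_eq' {n : ℕ} (x y : Fin n → ℍ[ℝ]) (hy : (∑ j, ‖y j‖^2) ≠ 0)
    (h : ‖∑ j, x j * y j‖^2 = (∑ j, ‖x j‖^2) * (∑ j, ‖y j‖^2)) :
    ∃ p : ℍ[ℝ], ∀ j, x j = p * star (y j) := by
  have hsum : (∑ j, (fun j => star (y j)) j * (fun j => star (x j)) j)
      = star (∑ j, x j * y j) := by
    rw [star_sum]
    exact Finset.sum_congr rfl fun j _ => by rw [star_mul]
  have hx' : (∑ j, ‖star (y j)‖^2) ≠ 0 := by simpa [norm_star] using hy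
  have h' : ‖∑ j, (fun j => star (y j)) j * (fun j => star (x j)) j‖^2
      = (∑ j, ‖star (y j)‖^2) * (∑ j, ‖star (x j)‖^2) := by
    rw [hsum, norm_star]
    simp only [norm_star]
    rw [h]; ring
  obtain ⟨q, hq⟩ := quat_cs_eq (fun j => star (y j)) (fun j => star (x j)) hx' h'
  refine ⟨star q, fun j => ?_⟩
  have := hq j
  simp only [star_star] at this
  calc x j = star (star (x j)) := (star_star _).symm
    _ = star (y j * q) := by rw [this]
    _ = star q * star (y j) := star_mul _ _

end Aux

/-- Frobenius norm of a matrix: `‖A‖ = √(∑ i j, ‖A i j‖²)`. -/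
noncomputable def frobNorm {ι κ α : Type*} [Fintype ι] [Fintype κ] [Norm α]
    (A : Matrix ι κ α) : ℝ :=
  Real.sqrt (∑ i, ∑ j, ‖A i j‖ ^ 2)

/-- Equality condition for sub-multiplicativity of the Frobenius norm on
quaternionic matrices: `‖XY‖ = ‖X‖‖Y‖` iff `‖X‖‖Y‖ = 0` or `X = a u*`, `Y = u b*`
for some vectors `a, b` and a unit vector `u`. -/
theorem frobenius_submultiplicative_equality (n : ℕ)
    (X Y : Matrix (Fin n) (Fin n) ℍ[ℝ]) :
    frobNorm (X * Y) = frobNorm X * frobNorm Y ↔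
      (frobNorm X * frobNorm Y = 0 ∨
        ∃ (a b u : Fin n → ℍ[ℝ]), (∑ j, ‖u j‖ ^ 2 = 1) ∧
          X = Matrix.of (fun i j => a i * star (u j)) ∧
          Y = Matrix.of (fun i j => u i * star (b j))) := by
  set S2 : Matrix (Fin n) (Fin n) ℍ[ℝ] → ℝ := fun A => ∑ i, ∑ j, ‖A i j‖ ^ 2 with hS2def
  have hS2nn : ∀ A, 0 ≤ S2 A := fun A =>
    Finset.sum_nonneg fun i _ => Finset.sum_nonneg fun j _ => sq_nonneg _
  have hfrob : ∀ A, frobNorm A = Real.sqrt (S2 A) := fun _ => rfl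
  have hprod : frobNorm X * frobNorm Y = Real.sqrt (S2 X * S2 Y) := by
    rw [hfrob, hfrob, Real.sqrt_mul (hS2nn X)]
  have hiff : frobNorm (X * Y) = frobNorm X * frobNorm Y ↔ S2 (X * Y) = S2 X * S2 Y := by
    rw [hfrob, hprod]
    exact Real.sqrt_inj (hS2nn _) (mul_nonneg (hS2nn X) (hS2nn Y))
  rw [hiff]
  constructor
  · intro heq
    by_cases hzero : frobNorm X * frobNorm Y = 0
    · exact Or.inl hzero
    right
    -- product of norms nonzero, hence S2 X ≠ 0 and S2 Y ≠ 0
    have hX2 : S2 X ≠ 0 := by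
      intro h0
      apply hzero
      rw [hfrob, h0, Real.sqrt_zero, zero_mul]
    have hY2 : S2 Y ≠ 0 := by
      intro h0
      apply hzero
      rw [hprod, h0, mul_zero, Real.sqrt_zero]
    -- row and column sums
    set RX : Fin n → ℝ := fun i => ∑ j, ‖X i j‖^2 with hRX
    set CY : Fin n → ℝ := fun k => ∑ j, ‖Y j k‖^2 with hCY
    -- termwise equality
    have hterm : ∀ i k, ‖∑ j, X i j * Y j k‖^2 = RX i * CY k := by
      have hle : ∀ p : Fin n × Fin n, p ∈ (Finset.univ : Finset (Fin n × Fin n)) →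
          ‖(X * Y) p.1 p.2‖^2 ≤ RX p.1 * CY p.2 := by
        intro p _
        rw [Matrix.mul_apply]
        exact quat_cs_ineq (fun j => X p.1 j) (fun j => Y j p.2)
      have hsum : (∑ p : Fin n × Fin n, ‖(X * Y) p.1 p.2‖^2)
          = ∑ p : Fin n × Fin n, RX p.1 * CY p.2 := by
        rw [Fintype.sum_prod_type, Fintype.sum_prod_type]
        calc ∑ i, ∑ k, ‖(X * Y) i k‖^2 = S2 (X * Y) := rfl
          _ = S2 X * S2 Y := heq
          _ = (∑ i, RX i) * (∑ k, CY k) := by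
              have h1 : S2 X = ∑ i, RX i := rfl
              have h2 : S2 Y = ∑ k, CY k := Finset.sum_comm
              rw [h1, h2]
          _ = ∑ i, ∑ k, RX i * CY k := Finset.sum_mul_sum _ _ _ _
      have := (Finset.sum_eq_sum_iff_of_le hle).1 hsum
      intro i k
      have h2 := this (i, k) (Finset.mem_univ _)
      rw [Matrix.mul_apply] at h2
      exact h2
    -- pick nonzero row of X and nonzero column of Y
    have hex_i0 : ∃ i0, RX i0 ≠ 0 := by
      by_contra hc
      push_neg at hc
      exact hX2 (Finset.sum_eq_zero fun i _ => hc i)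
    have hex_k0 : ∃ k0, CY k0 ≠ 0 := by
      by_contra hc
      push_neg at hc
      apply hY2
      show (∑ i, ∑ j, ‖Y i j‖^2) = 0
      rw [Finset.sum_comm]
      exact Finset.sum_eq_zero fun k _ => hc k
    obtain ⟨i0, hi0⟩ := hex_i0
    obtain ⟨k0, hk0⟩ := hex_k0
    -- columns of Y
    have hqk : ∀ k, ∃ q : ℍ[ℝ], ∀ j, Y j k = star (X i0 j) * q := fun k =>
      quat_cs_eq (fun j => X i0 j) (fun j => Y j k) hi0 (hterm i0 k)
    choose q hq using hqk
    -- rows of X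
    have hpi : ∀ i, ∃ p : ℍ[ℝ], ∀ j, X i j = p * star (Y j k0) := fun i =>
      quat_cs_eq' (fun j => X i j) (fun j => Y j k0) hk0 (hterm i k0)
    choose p hp using hpi
    -- construct a, b, u
    set ρ := Real.sqrt (RX i0) with hρdef
    have hRXpos : 0 < RX i0 :=
      lt_of_le_of_ne (Finset.sum_nonneg fun j _ => sq_nonneg _) (Ne.symm hi0)
    have hρpos : 0 < ρ := Real.sqrt_pos.2 hRXpos
    have hρsq : ρ^2 = RX i0 := Real.sq_sqrt hRXpos.le
    refine ⟨fun i => ρ • (p i * star (q k0)), fun k => ρ • star (q k),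
      fun j => ρ⁻¹ • star (X i0 j), ?_, ?_, ?_⟩
    · -- unit vector
      have : ∀ j, ‖(ρ⁻¹ : ℝ) • star (X i0 j)‖^2 = ρ⁻¹^2 * ‖X i0 j‖^2 := by
        intro j
        rw [norm_smul, Real.norm_eq_abs, mul_pow, sq_abs, norm_star]
      rw [Finset.sum_congr rfl (fun j _ => this j), ← Finset.mul_sum]
      show ρ⁻¹^2 * RX i0 = 1
      rw [← hρsq]
      field_simp
    · -- X = a u*
      refine Matrix.ext fun i j => ?_
      simp only [Matrix.of_apply]
      rw [quat_star_smul, star_star, smul_mul_assoc, mul_smul_comm, smul_smul,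
        mul_inv_cancel₀ hρpos.ne', one_smul]
      calc X i j = p i * star (Y j k0) := hp i j
        _ = p i * star (star (X i0 j) * q k0) := by rw [hq k0 j]
        _ = p i * (star (q k0) * X i0 j) := by rw [star_mul, star_star]
        _ = p i * star (q k0) * X i0 j := by rw [mul_assoc]
    · -- Y = u b*
      refine Matrix.ext fun j k => ?_
      simp only [Matrix.of_apply]
      rw [quat_star_smul, star_star, smul_mul_assoc, mul_smul_comm, smul_smul,
        inv_mul_cancel₀ hρpos.ne', one_smul]
      exact hq k j
  · rintro (hzero | ⟨a, b, u, hu, hX, hY⟩)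
    · -- zero case
      have h0 : S2 X = 0 ∨ S2 Y = 0 := by
        rcases mul_eq_zero.1 hzero with h | h
        · left
          have := Real.sqrt_eq_zero (hS2nn X) |>.1 h
          exact this
        · right
          exact Real.sqrt_eq_zero (hS2nn Y) |>.1 h
      have hXY0 : S2 (X * Y) = 0 := by
        rcases h0 with h | h
        · have hX0 : X = 0 := by
            refine Matrix.ext fun i j => ?_
            have := (Finset.sum_eq_zero_iff_of_nonneg
              (fun i _ => Finset.sum_nonneg fun j _ => sq_nonneg ‖X i j‖)).1 h i
              (Finset.mem_univ i)
            have := (Finset.sum_eq_zero_iff_of_nonneg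
              (fun j _ => sq_nonneg ‖X i j‖)).1 this j (Finset.mem_univ j)
            simpa [pow_eq_zero_iff] using this
          rw [hX0, Matrix.zero_mul]
          simp [hS2def]
        · have hY0 : Y = 0 := by
            refine Matrix.ext fun i j => ?_
            have h1 := (Finset.sum_eq_zero_iff_of_nonneg
              (fun i _ => Finset.sum_nonneg fun j _ => sq_nonneg ‖Y i j‖)).1 h i
              (Finset.mem_univ i)
            have := (Finset.sum_eq_zero_iff_of_nonneg
              (fun j _ => sq_nonneg ‖Y i j‖)).1 h1 j (Finset.mem_univ j)
            simpa [pow_eq_zero_iff] using this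
          rw [hY0, Matrix.mul_zero]
          simp [hS2def]
      rw [hXY0]
      rcases h0 with h | h
      · rw [h, zero_mul]
      · rw [h, mul_zero]
    · -- structured case
      have hXY : ∀ i k, (X * Y) i k = a i * star (b k) := by
        intro i k
        rw [Matrix.mul_apply, hX, hY]
        simp only [Matrix.of_apply]
        have h1 : ∀ j, a i * star (u j) * (u j * star (b k))
            = a i * (star (u j) * u j) * star (b k) := by
          intro j; rw [mul_assoc, mul_assoc, mul_assoc]
        rw [Finset.sum_congr rfl (fun j _ => h1 j)]
        have h2 : (∑ j, a i * (star (u j) * u j) * star (b k))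
            = a i * (∑ j, star (u j) * u j) * star (b k) := by
          rw [Finset.mul_sum, Finset.sum_mul]
        rw [h2]
        have h3 : (∑ j, star (u j) * u j) = ((1 : ℝ) : ℍ[ℝ]) := by
          have : ∀ j, star (u j) * u j = ((‖u j‖^2 : ℝ) : ℍ[ℝ]) := by
            intro j
            rw [Quaternion.star_mul_self, quat_norm_sq_eq]
          have hcast : (∑ j, ((‖u j‖^2 : ℝ) : ℍ[ℝ])) = (((∑ j, ‖u j‖^2 : ℝ)) : ℍ[ℝ]) :=
            (map_sum (algebraMap ℝ ℍ[ℝ]) _ Finset.univ).symm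
          rw [Finset.sum_congr rfl (fun j _ => this j), hcast, hu]
        rw [h3]
        simp
      have hSX : S2 X = ∑ i, ‖a i‖^2 := by
        rw [hS2def, hX]
        simp only [Matrix.of_apply]
        calc ∑ i, ∑ j, ‖a i * star (u j)‖^2
            = ∑ i, ∑ j, ‖a i‖^2 * ‖u j‖^2 := by
              refine Finset.sum_congr rfl fun i _ => Finset.sum_congr rfl fun j _ => ?_
              rw [norm_mul, norm_star, mul_pow]
          _ = ∑ i, ‖a i‖^2 * (∑ j, ‖u j‖^2) := by
              refine Finset.sum_congr rfl fun i _ => ?_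
              rw [Finset.mul_sum]
          _ = ∑ i, ‖a i‖^2 := by rw [hu]; simp
      have hSY : S2 Y = ∑ k, ‖b k‖^2 := by
        rw [hS2def, hY]
        simp only [Matrix.of_apply]
        calc ∑ j, ∑ k, ‖u j * star (b k)‖^2
            = ∑ j, ∑ k, ‖u j‖^2 * ‖b k‖^2 := by
              refine Finset.sum_congr rfl fun j _ => Finset.sum_congr rfl fun k _ => ?_
              rw [norm_mul, norm_star, mul_pow]
          _ = ∑ j, ‖u j‖^2 * (∑ k, ‖b k‖^2) := by
              refine Finset.sum_congr rfl fun j _ => ?_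
              rw [Finset.mul_sum]
          _ = ∑ k, ‖b k‖^2 := by rw [← Finset.sum_mul, hu, one_mul]
      have hSXY : S2 (X * Y) = (∑ i, ‖a i‖^2) * (∑ k, ‖b k‖^2) := by
        rw [hS2def]
        calc ∑ i, ∑ k, ‖(X * Y) i k‖^2
            = ∑ i, ∑ k, ‖a i‖^2 * ‖b k‖^2 := by
              refine Finset.sum_congr rfl fun i _ => Finset.sum_congr rfl fun k _ => ?_
              rw [hXY, norm_mul, norm_star, mul_pow]
          _ = (∑ i, ‖a i‖^2) * (∑ k, ‖b k‖^2) := by rw [← Finset.sum_mul_sum]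
      rw [hSXY, hSX, hSY]
end

section
/- Let a, b ∈ ℍⁿ be quaternionic vectors and ⟨a,b⟩_ℍ := ∑_{i=1}^n conj(b_i) a_i ∈ ℍ. Then ‖⟨a,b⟩_ℍ‖ = ‖a‖ ‖b‖ holds if and only if either ‖a‖‖b‖ = 0 or there exists a quaternion σ ∈ ℍ such that b = a σ (i.e. b_i = a_i σ for all i). -/
open scoped BigOperators Quaternion RealInnerProductSpace

set_option maxHeartbeats 1000000

private lemma quat_re_comm (x y : ℍ[ℝ]) : (x * y).re = (y * x).re := by
  simp only [Quaternion.re_mul]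
  ring

private lemma quat_re_sum_s14 {ι : Type*} (t : Finset ι) (f : ι → ℍ[ℝ]) :
    (∑ i ∈ t, f i).re = ∑ i ∈ t, (f i).re := by
  induction t using Finset.cons_induction with
  | empty => simp
  | cons i t hi ih => simp [Finset.sum_cons, ih]

/-- Equality condition in the Cauchy–Schwarz inequality for quaternionic vectors:
`‖⟨a,b⟩_ℍ‖ = ‖a‖‖b‖` iff `‖a‖‖b‖ = 0` or `b = a σ` for some quaternion `σ`. -/
theorem quaternion_cauchy_schwarz_equality (n : ℕ) (a b : Fin n → ℍ[ℝ]) :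
    ‖∑ i, star (b i) * a i‖ =
        Real.sqrt (∑ i, ‖a i‖ ^ 2) * Real.sqrt (∑ i, ‖b i‖ ^ 2) ↔
      (Real.sqrt (∑ i, ‖a i‖ ^ 2) * Real.sqrt (∑ i, ‖b i‖ ^ 2) = 0 ∨
        ∃ σ : ℍ[ℝ], ∀ i, b i = a i * σ) := by
  set r : ℝ := ∑ i, ‖a i‖ ^ 2 with hr
  set s : ℝ := ∑ i, ‖b i‖ ^ 2 with hs
  set S : ℍ[ℝ] := ∑ i, star (b i) * a i with hS
  have hrnn : 0 ≤ r := Finset.sum_nonneg fun i _ => sq_nonneg _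
  have hsnn : 0 ≤ s := Finset.sum_nonneg fun i _ => sq_nonneg _
  constructor
  · intro h
    by_cases h0 : Real.sqrt r * Real.sqrt s = 0
    · exact Or.inl h0
    · right
      have hrne : r ≠ 0 := by
        intro hr0
        simp [hr0] at h0
      have hrpos : 0 < r := lt_of_le_of_ne hrnn (Ne.symm hrne)
      set σ : ℍ[ℝ] := (r⁻¹ : ℝ) • star S with hσdef
      refine ⟨σ, ?_⟩
      have hnormσ : ‖σ‖ = r⁻¹ * ‖S‖ := by
        rw [hσdef, norm_smul, Real.norm_eq_abs, abs_of_pos (inv_pos.mpr hrpos),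
          Quaternion.norm_star]
      have hS2 : ‖S‖ ^ 2 = r * s := by
        rw [h, mul_pow, Real.sq_sqrt hrnn, Real.sq_sqrt hsnn]
      have hstarS : star S = ∑ i, star (a i) * b i := by
        rw [hS, star_sum]
        exact Finset.sum_congr rfl fun i _ => by rw [star_mul, star_star]
      have e1 : ∀ i, (b i * star (a i * σ)).re = r⁻¹ * (S * (star (a i) * b i)).re := by
        intro i
        rw [star_mul, hσdef, Quaternion.star_smul, star_star,
          smul_mul_assoc, mul_smul_comm, Quaternion.re_smul]
        congr 1
        rw [← mul_assoc, quat_re_comm]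
        conv_rhs => rw [quat_re_comm, mul_assoc]
      have hinner : ∑ i, (b i * star (a i * σ)).re = r⁻¹ * ‖S‖ ^ 2 := by
        rw [Finset.sum_congr rfl fun i _ => e1 i, ← Finset.mul_sum]
        congr 1
        rw [← quat_re_sum_s14, ← Finset.mul_sum, ← hstarS, Quaternion.self_mul_star]
        rw [Quaternion.normSq_eq_norm_mul_self, sq]
        rfl
      have hsum0 : ∑ i, ‖b i - a i * σ‖ ^ 2 = 0 := by
        have expand : ∀ i, ‖b i - a i * σ‖ ^ 2 =
            ‖b i‖ ^ 2 - 2 * (b i * star (a i * σ)).re + ‖a i * σ‖ ^ 2 := by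
          intro i
          rw [← Quaternion.inner_def]
          exact norm_sub_sq_real _ _
        rw [Finset.sum_congr rfl fun i _ => expand i, Finset.sum_add_distrib,
          Finset.sum_sub_distrib, ← Finset.mul_sum, hinner]
        have : ∑ i, ‖a i * σ‖ ^ 2 = r * ‖σ‖ ^ 2 := by
          rw [hr, Finset.sum_mul]
          exact Finset.sum_congr rfl fun i _ => by rw [norm_mul, mul_pow]
        rw [this, hnormσ, hS2, ← hs]
        field_simp
        linear_combination hS2
      intro i
      have hterm : ‖b i - a i * σ‖ ^ 2 = 0 :=
        (Finset.sum_eq_zero_iff_of_nonneg fun j _ => sq_nonneg _).mp hsum0 i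
          (Finset.mem_univ i)
      have hz : b i - a i * σ = 0 :=
        norm_eq_zero.mp (pow_eq_zero_iff two_ne_zero |>.mp hterm)
      exact (sub_eq_zero.mp hz)
  · rintro (h0 | ⟨σ, hσ⟩)
    · rw [h0]
      rcases mul_eq_zero.mp h0 with h | h
      · have hr0 : r = 0 := Real.sqrt_eq_zero hrnn |>.mp h
        have ha : ∀ i ∈ Finset.univ, ‖a i‖ ^ 2 = 0 := by
          rw [hr] at hr0
          exact (Finset.sum_eq_zero_iff_of_nonneg fun i _ => sq_nonneg _).mp hr0
        have : S = 0 := by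
          rw [hS]
          refine Finset.sum_eq_zero fun i _ => ?_
          have hai : a i = 0 := by
            have := ha i (Finset.mem_univ i)
            simpa using this
          simp [hai]
        simp [this]
      · have hs0 : s = 0 := Real.sqrt_eq_zero hsnn |>.mp h
        have hb : ∀ i ∈ Finset.univ, ‖b i‖ ^ 2 = 0 := by
          rw [hs] at hs0
          exact (Finset.sum_eq_zero_iff_of_nonneg fun i _ => sq_nonneg _).mp hs0
        have : S = 0 := by
          rw [hS]
          refine Finset.sum_eq_zero fun i _ => ?_
          have hbi : b i = 0 := by
            have := hb i (Finset.mem_univ i)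
            simpa using this
          simp [hbi]
        simp [this]
    · have hSeq : S = star σ * ((r : ℝ) : ℍ[ℝ]) := by
        rw [hS]
        have e : ∀ i, star (b i) * a i = star σ * ((‖a i‖ ^ 2 : ℝ) : ℍ[ℝ]) := by
          intro i
          rw [hσ i, star_mul, mul_assoc, Quaternion.star_mul_self]
          congr 1
          rw [Quaternion.normSq_eq_norm_mul_self, sq]
        rw [Finset.sum_congr rfl fun i _ => e i, ← Finset.mul_sum]
        congr 1
        rw [hr]
        exact (map_sum (algebraMap ℝ ℍ[ℝ]) _ _).symm
      have hseq : s = r * ‖σ‖ ^ 2 := by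
        rw [hs, hr, Finset.sum_mul]
        refine Finset.sum_congr rfl fun i _ => ?_
        rw [hσ i, norm_mul, mul_pow]
      rw [hSeq, norm_mul, Quaternion.norm_star, Quaternion.norm_coe,
        Real.norm_eq_abs, abs_of_nonneg hrnn, hseq, Real.sqrt_mul hrnn,
        Real.sqrt_sq (norm_nonneg _)]
      have hms : Real.sqrt r * Real.sqrt r = r := Real.mul_self_sqrt hrnn
      linear_combination (-‖σ‖ : ℝ) * hms
end

section
/- Let I and R be finite index sets and let b : R × I → ℝ be a family of real numbers b^r_i. Then ∑_{r,s ∈ R} (∑_{i ∈ I} b^r_i b^s_i)² ≥ (1/N) (∑_{r ∈ R} ∑_{i ∈ I} (b^r_i)²)², where N = min{|I|, |R|} and |I|, |R| are the cardinalities of I and R (assumed nonempty). -/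
open scoped BigOperators

private lemma trace_sq_le {K : Type*} [Fintype K] (f : K → K → ℝ) :
    (∑ k : K, f k k) ^ 2 ≤ (Fintype.card K : ℝ) * ∑ k : K, ∑ l : K, (f k l) ^ 2 := by
  calc (∑ k : K, f k k) ^ 2 ≤ (Fintype.card K : ℝ) * ∑ k : K, (f k k) ^ 2 := by
        have h := sq_sum_le_card_mul_sum_sq (s := (Finset.univ : Finset K))
          (f := fun k => f k k)
        rwa [Finset.card_univ] at h
    _ ≤ (Fintype.card K : ℝ) * ∑ k : K, ∑ l : K, (f k l) ^ 2 := by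
        apply mul_le_mul_of_nonneg_left _ (by positivity)
        apply Finset.sum_le_sum
        intro k _
        exact Finset.single_le_sum (f := fun l => (f k l) ^ 2)
          (fun l _ => sq_nonneg _) (Finset.mem_univ k)

/-- Lemma for DDVV-type inequalities over Clifford systems/algebras:
`∑_{r,s} (∑_i b^r_i b^s_i)² ≥ (1/N) (∑_r ∑_i (b^r_i)²)²` with
`N = min{|I|, |R|}`. -/
theorem clifford_lemma {I R : Type*} [Fintype I] [Fintype R]
    [Nonempty I] [Nonempty R] (b : R → I → ℝ) :
    ∑ r : R, ∑ s : R, (∑ i : I, b r i * b s i) ^ 2 ≥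
      (1 / ((min (Fintype.card I) (Fintype.card R) : ℕ) : ℝ)) *
        (∑ r : R, ∑ i : I, (b r i) ^ 2) ^ 2 := by
  set S : ℝ := ∑ r : R, ∑ s : R, (∑ i : I, b r i * b s i) ^ 2 with hS
  set T : ℝ := ∑ r : R, ∑ i : I, (b r i) ^ 2 with hT
  have hSnonneg : 0 ≤ S := Finset.sum_nonneg fun r _ =>
    Finset.sum_nonneg fun s _ => sq_nonneg _
  have hNpos : (0 : ℝ) < ((min (Fintype.card I) (Fintype.card R) : ℕ) : ℝ) := by
    have h1 : 0 < Fintype.card I := Fintype.card_pos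
    have h2 : 0 < Fintype.card R := Fintype.card_pos
    exact_mod_cast lt_min h1 h2
  rw [ge_iff_le, one_div, inv_mul_le_iff₀ hNpos]
  -- key identity: S equals the symmetric sum over I × I
  have hkey : S = ∑ i : I, ∑ j : I, (∑ r : R, b r i * b r j) ^ 2 := by
    have expand1 : S = ∑ r : R, ∑ s : R, ∑ i : I, ∑ j : I,
        b r i * b s i * (b r j * b s j) := by
      simp only [hS, sq, Finset.sum_mul_sum]
    have expand2 : (∑ i : I, ∑ j : I, (∑ r : R, b r i * b r j) ^ 2)
        = ∑ i : I, ∑ j : I, ∑ r : R, ∑ s : R, b r i * b r j * (b s i * b s j) := by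
      simp only [sq, Finset.sum_mul_sum]
    rw [expand1, expand2]
    calc ∑ r : R, ∑ s : R, ∑ i : I, ∑ j : I, b r i * b s i * (b r j * b s j)
        = ∑ r : R, ∑ i : I, ∑ s : R, ∑ j : I, b r i * b s i * (b r j * b s j) :=
          Finset.sum_congr rfl fun r _ => Finset.sum_comm
      _ = ∑ i : I, ∑ r : R, ∑ s : R, ∑ j : I, b r i * b s i * (b r j * b s j) :=
          Finset.sum_comm
      _ = ∑ i : I, ∑ r : R, ∑ j : I, ∑ s : R, b r i * b s i * (b r j * b s j) :=
          Finset.sum_congr rfl fun i _ => Finset.sum_congr rfl fun r _ =>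
            Finset.sum_comm
      _ = ∑ i : I, ∑ j : I, ∑ r : R, ∑ s : R, b r i * b s i * (b r j * b s j) :=
          Finset.sum_congr rfl fun i _ => Finset.sum_comm
      _ = ∑ i : I, ∑ j : I, ∑ r : R, ∑ s : R, b r i * b r j * (b s i * b s j) := by
          refine Finset.sum_congr rfl fun i _ => Finset.sum_congr rfl fun j _ =>
            Finset.sum_congr rfl fun r _ => Finset.sum_congr rfl fun s _ => ?_
          ring
  rcases le_total (Fintype.card I) (Fintype.card R) with hle | hle
  · have hmin : (min (Fintype.card I) (Fintype.card R)) = Fintype.card I := min_eq_left hle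
    rw [hmin, hkey]
    have hTeq : T = ∑ i : I, (∑ r : R, b r i * b r i) := by
      rw [hT, Finset.sum_comm]
      refine Finset.sum_congr rfl fun i _ => ?_; refine Finset.sum_congr rfl fun r _ => ?_; ring
    rw [hTeq]
    exact trace_sq_le (fun i j => ∑ r : R, b r i * b r j)
  · have hmin : (min (Fintype.card I) (Fintype.card R)) = Fintype.card R := min_eq_right hle
    rw [hmin]
    have hTeq' : T = ∑ r : R, (∑ i : I, b r i * b r i) := by
      refine Finset.sum_congr rfl fun r _ => ?_; refine Finset.sum_congr rfl fun i _ => ?_; ring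
    rw [hTeq']
    exact trace_sq_le (fun r s => ∑ i : I, b r i * b s i)
end

section
/- Let P₀, P₁, …, P_m be real symmetric orthogonal 2l×2l matrices forming a Clifford system, i.e. P_i P_j + P_j P_i = 2δ_{ij} I_{2l} for all 0 ≤ i, j ≤ m, with l ≥ 1. Let B₁, …, B_M lie in the real span of {P₀, …, P_m}. Then ∑_{r,s=1}^M ‖[B_r, B_s]‖² ≤ (2/l)(1 − 1/N) (∑_{r=1}^M ‖B_r‖²)², where N = min{m+1, M}. -/
open scoped BigOperators
open Matrix

/-- DDVV-type inequality for matrices in the span of a Clifford system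
`(P₀, …, P_m)` on `ℝ^{2l}`. -/
theorem ddvv_clifford_system (l m M : ℕ) (hl : 1 ≤ l)
    (P : Fin (m + 1) → Matrix (Fin (2 * l)) (Fin (2 * l)) ℝ)
    (hsym : ∀ i, (P i)ᵀ = P i)
    (horth : ∀ i, P i * (P i)ᵀ = 1)
    (hcliff : ∀ i j, P i * P j + P j * P i =
      if i = j then (2 : ℝ) • (1 : Matrix (Fin (2 * l)) (Fin (2 * l)) ℝ) else 0)
    (B : Fin M → Matrix (Fin (2 * l)) (Fin (2 * l)) ℝ)
    (hB : ∀ r, B r ∈ Submodule.span ℝ (Set.range P)) :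
    ∑ r, ∑ s, frobSq (B r * B s - B s * B r) ≤
      (2 / (l : ℝ)) * (1 - 1 / ((min (m + 1) M : ℕ) : ℝ)) *
        (∑ r, frobSq (B r)) ^ 2 := by
  classical
  rcases Nat.eq_zero_or_pos M with hM | hM
  · subst hM
    simp
  choose c hc using fun r => (Submodule.mem_span_range_iff_exists_fun ℝ).mp (hB r)
  set g : Fin M → Fin M → ℝ := fun r s => ∑ i, c r i * c s i with hg
  -- expansion of products
  have hBexp : ∀ r s, B r * B s = ∑ i, ∑ j, (c r i * c s j) • (P i * P j) := by
    intro r s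
    rw [← hc r, ← hc s, Finset.sum_mul]
    refine Finset.sum_congr rfl fun i _ => ?_
    rw [Finset.mul_sum]
    refine Finset.sum_congr rfl fun j _ => ?_
    rw [smul_mul_assoc, mul_smul_comm, smul_smul]
  -- anticommutation at the level of B
  have hanti : ∀ r s, B r * B s + B s * B r
      = (2 * g r s) • (1 : Matrix (Fin (2 * l)) (Fin (2 * l)) ℝ) := by
    intro r s
    rw [hBexp r s, hBexp s r]
    have hswap : (∑ i, ∑ j, (c s i * c r j) • (P i * P j))
        = ∑ i, ∑ j, (c r i * c s j) • (P j * P i) := by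
      rw [Finset.sum_comm]
      exact Finset.sum_congr rfl fun i _ => Finset.sum_congr rfl fun j _ => by
        rw [mul_comm (c s j) (c r i)]
    rw [hswap, ← Finset.sum_add_distrib]
    have : ∀ i, (∑ j, (c r i * c s j) • (P i * P j)) + ∑ j, (c r i * c s j) • (P j * P i)
        = (2 * (c r i * c s i)) • (1 : Matrix (Fin (2 * l)) (Fin (2 * l)) ℝ) := by
      intro i
      rw [← Finset.sum_add_distrib]
      have h1 : ∀ j, (c r i * c s j) • (P i * P j) + (c r i * c s j) • (P j * P i)
          = (c r i * c s j) • (if j = i then (2 : ℝ) • (1 : Matrix (Fin (2 * l)) (Fin (2 * l)) ℝ) else 0) := by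
        intro j
        rw [← smul_add, hcliff i j]
        congr 1
        simp [eq_comm]
      simp_rw [h1, smul_ite, smul_zero]
      rw [Finset.sum_ite_eq' Finset.univ i
        (fun j => (c r i * c s j) • ((2:ℝ) • (1 : Matrix (Fin (2 * l)) (Fin (2 * l)) ℝ)))]
      simp only [Finset.mem_univ, if_true, smul_smul]
      ring_nf
    simp_rw [this]
    rw [← Finset.sum_smul]
    congr 1
    rw [← Finset.mul_sum]
  -- B r squared
  have hsq : ∀ r, B r * B r = (g r r) • (1 : Matrix (Fin (2 * l)) (Fin (2 * l)) ℝ) := by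
    intro r
    have h := hanti r r
    have h2 : (2:ℝ) • (B r * B r) = (2:ℝ) • ((g r r) • (1 : Matrix (Fin (2 * l)) (Fin (2 * l)) ℝ)) := by
      rw [two_smul, h, smul_smul]
    exact smul_right_injective _ (by norm_num) h2
  -- symmetry of B r
  have hsymB : ∀ r, (B r)ᵀ = B r := by
    intro r
    rw [← hc r, Matrix.transpose_sum]
    exact Finset.sum_congr rfl fun i _ => by rw [Matrix.transpose_smul, hsym]
  -- trace of 1
  have htr1 : Matrix.trace (1 : Matrix (Fin (2 * l)) (Fin (2 * l)) ℝ) = (2 * l : ℝ) := by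
    simp [Matrix.trace_one]
  -- trace of products
  have htrBB : ∀ r s, Matrix.trace (B r * B s) = 2 * l * g r s := by
    intro r s
    have h := congrArg Matrix.trace (hanti r s)
    rw [Matrix.trace_add, Matrix.trace_mul_comm (B s) (B r), Matrix.trace_smul, htr1] at h
    have : (2:ℝ) * Matrix.trace (B r * B s) = 2 * l * g r s * 2 := by
      rw [two_mul, h, smul_eq_mul]; ring
    linarith
  -- frobSq as trace
  have hfrob : ∀ A : Matrix (Fin (2 * l)) (Fin (2 * l)) ℝ, frobSq A = Matrix.trace (A * Aᵀ) := by
    intro A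
    simp only [frobSq, Matrix.trace, Matrix.diag_apply, Matrix.mul_apply, Matrix.transpose_apply]
    exact Finset.sum_congr rfl fun i _ => Finset.sum_congr rfl fun j _ => by
      rw [Real.norm_eq_abs, sq_abs, sq]
  -- frobSq of B r
  have hfrobB : ∀ r, frobSq (B r) = 2 * l * g r r := by
    intro r
    rw [hfrob, hsymB, htrBB]
  -- symmetry of g
  have hgsymm : ∀ r s, g r s = g s r := by
    intro r s
    exact Finset.sum_congr rfl fun i _ => mul_comm _ _
  -- frobSq of commutator
  have hcomm : ∀ r s, frobSq (B r * B s - B s * B r)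
      = 8 * l * (g r r * g s s - g r s ^ 2) := by
    intro r s
    rw [hfrob]
    have ht : (B r * B s - B s * B r)ᵀ = B s * B r - B r * B s := by
      rw [Matrix.transpose_sub, Matrix.transpose_mul, Matrix.transpose_mul, hsymB, hsymB]
    rw [ht]
    have hexp : (B r * B s - B s * B r) * (B s * B r - B r * B s)
        = B r * B s * (B s * B r) - B r * B s * (B r * B s)
          - B s * B r * (B s * B r) + B s * B r * (B r * B s) := by
      noncomm_ring
    rw [hexp]
    have e1 : B r * B s * (B s * B r) = (g r r * g s s) • (1 : Matrix (Fin (2 * l)) (Fin (2 * l)) ℝ) := by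
      calc B r * B s * (B s * B r) = B r * (B s * B s) * B r := by noncomm_ring
        _ = B r * ((g s s) • 1) * B r := by rw [hsq]
        _ = (g s s) • (B r * B r) := by
            rw [Matrix.mul_smul, Matrix.mul_one, Matrix.smul_mul]
        _ = (g r r * g s s) • 1 := by
            rw [hsq, smul_smul, mul_comm (g s s) (g r r)]
    have e4 : B s * B r * (B r * B s) = (g r r * g s s) • (1 : Matrix (Fin (2 * l)) (Fin (2 * l)) ℝ) := by
      calc B s * B r * (B r * B s) = B s * (B r * B r) * B s := by noncomm_ring
        _ = B s * ((g r r) • 1) * B s := by rw [hsq]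
        _ = (g r r) • (B s * B s) := by
            rw [Matrix.mul_smul, Matrix.mul_one, Matrix.smul_mul]
        _ = (g r r * g s s) • 1 := by rw [hsq, smul_smul]
    have hsr : B s * B r = (2 * g r s) • (1 : Matrix (Fin (2 * l)) (Fin (2 * l)) ℝ) - B r * B s := by
      have := hanti r s
      rw [← this]; noncomm_ring
    have e2 : B r * B s * (B r * B s)
        = (2 * g r s) • (B r * B s) - (g r r * g s s) • (1 : Matrix (Fin (2 * l)) (Fin (2 * l)) ℝ) := by
      calc B r * B s * (B r * B s) = B r * (B s * B r) * B s := by noncomm_ring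
        _ = B r * ((2 * g r s) • (1 : Matrix (Fin (2 * l)) (Fin (2 * l)) ℝ) - B r * B s) * B s := by rw [← hsr]
        _ = (2 * g r s) • (B r * B s) - B r * (B r * B s) * B s := by
            rw [Matrix.mul_sub, Matrix.sub_mul, Matrix.mul_smul, Matrix.mul_one, Matrix.smul_mul]
        _ = (2 * g r s) • (B r * B s) - (g r r * g s s) • 1 := by
            congr 1
            calc B r * (B r * B s) * B s = (B r * B r) * (B s * B s) := by noncomm_ring
              _ = (g r r) • (1 : Matrix (Fin (2 * l)) (Fin (2 * l)) ℝ) * ((g s s) • 1) := by rw [hsq, hsq]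
              _ = (g r r * g s s) • 1 := by
                  rw [Matrix.smul_mul, Matrix.mul_smul, Matrix.one_mul, smul_smul]
    have e3 : B s * B r * (B s * B r)
        = (2 * g r s) • (B s * B r) - (g r r * g s s) • (1 : Matrix (Fin (2 * l)) (Fin (2 * l)) ℝ) := by
      have hrs : B r * B s = (2 * g r s) • (1 : Matrix (Fin (2 * l)) (Fin (2 * l)) ℝ) - B s * B r := by
        have := hanti r s
        rw [← this]; noncomm_ring
      calc B s * B r * (B s * B r) = B s * (B r * B s) * B r := by noncomm_ring
        _ = B s * ((2 * g r s) • (1 : Matrix (Fin (2 * l)) (Fin (2 * l)) ℝ) - B s * B r) * B r := by rw [← hrs]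
        _ = (2 * g r s) • (B s * B r) - B s * (B s * B r) * B r := by
            rw [Matrix.mul_sub, Matrix.sub_mul, Matrix.mul_smul, Matrix.mul_one, Matrix.smul_mul]
        _ = (2 * g r s) • (B s * B r) - (g r r * g s s) • 1 := by
            congr 1
            calc B s * (B s * B r) * B r = (B s * B s) * (B r * B r) := by noncomm_ring
              _ = (g s s) • (1 : Matrix (Fin (2 * l)) (Fin (2 * l)) ℝ) * ((g r r) • 1) := by rw [hsq, hsq]
              _ = (g r r * g s s) • 1 := by
                  rw [Matrix.smul_mul, Matrix.mul_smul, Matrix.one_mul, smul_smul,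
                    mul_comm (g s s) (g r r)]
    rw [Matrix.trace_add, Matrix.trace_sub, Matrix.trace_sub, e1, e2, e3, e4]
    simp only [Matrix.trace_sub, Matrix.trace_smul, htr1, htrBB, smul_eq_mul, hgsymm s r]
    ring
  -- abbreviations
  set T : ℝ := ∑ r, g r r with hT
  set S : ℝ := ∑ r, ∑ s, (g r s) ^ 2 with hS
  -- rewrite LHS and the sums
  have hT2 : T ^ 2 = ∑ r, ∑ s, g r r * g s s := by
    rw [pow_two, hT, Finset.sum_mul_sum]
  have hLHS : ∑ r, ∑ s, frobSq (B r * B s - B s * B r) = 8 * l * (T ^ 2 - S) := by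
    have h0 : ∀ r : Fin M, ∑ s, frobSq (B r * B s - B s * B r)
        = ∑ s, 8 * l * (g r r * g s s - g r s ^ 2) := by
      intro r; exact Finset.sum_congr rfl fun s _ => hcomm r s
    simp_rw [h0]
    rw [hT2, hS, ← Finset.sum_sub_distrib, Finset.mul_sum]
    refine Finset.sum_congr rfl fun r _ => ?_
    rw [← Finset.sum_sub_distrib, Finset.mul_sum]
  have hsumB : ∑ r, frobSq (B r) = 2 * l * T := by
    simp_rw [hfrobB]
    rw [hT, Finset.mul_sum]
  rw [hLHS, hsumB]
  -- nonnegativity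
  have hS0 : 0 ≤ S := Finset.sum_nonneg fun r _ => Finset.sum_nonneg fun s _ => sq_nonneg _
  -- Cauchy-Schwarz bound with M
  have hTM : T ^ 2 ≤ (M : ℝ) * S := by
    have h1 : T ^ 2 ≤ (M : ℝ) * ∑ r, (g r r) ^ 2 := by
      have := sq_sum_le_card_mul_sum_sq (s := (Finset.univ : Finset (Fin M))) (f := fun r => g r r)
      simpa using this
    refine h1.trans ?_
    have h2 : ∑ r, (g r r) ^ 2 ≤ S := by
      refine Finset.sum_le_sum fun r _ => ?_
      exact Finset.single_le_sum (f := fun s => (g r s) ^ 2) (fun s _ => sq_nonneg _) (Finset.mem_univ r)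
    have hM0 : (0:ℝ) ≤ (M : ℝ) := by positivity
    nlinarith
  -- Cauchy-Schwarz bound with m+1 via H
  have hTm : T ^ 2 ≤ ((m : ℝ) + 1) * S := by
    set H : Fin (m+1) → Fin (m+1) → ℝ := fun i j => ∑ r, c r i * c r j with hH
    have hTH : T = ∑ i, H i i := by
      rw [hT, Finset.sum_comm]
    have swap4 : ∀ (f : Fin M → Fin M → Fin (m+1) → Fin (m+1) → ℝ),
        ∑ r, ∑ s, ∑ i, ∑ j, f r s i j = ∑ i, ∑ j, ∑ r, ∑ s, f r s i j := by
      intro f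
      calc ∑ r, ∑ s, ∑ i, ∑ j, f r s i j
          = ∑ r, ∑ i, ∑ s, ∑ j, f r s i j :=
            Finset.sum_congr rfl fun r _ => Finset.sum_comm
        _ = ∑ i, ∑ r, ∑ s, ∑ j, f r s i j := Finset.sum_comm
        _ = ∑ i, ∑ r, ∑ j, ∑ s, f r s i j :=
            Finset.sum_congr rfl fun i _ => Finset.sum_congr rfl fun r _ => Finset.sum_comm
        _ = ∑ i, ∑ j, ∑ r, ∑ s, f r s i j :=
            Finset.sum_congr rfl fun i _ => Finset.sum_comm
    have hSH : S = ∑ i, ∑ j, (H i j) ^ 2 := by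
      rw [hS]
      have expand : ∀ r s : Fin M, (g r s) ^ 2 = ∑ i, ∑ j, (c r i * c s i) * (c r j * c s j) := by
        intro r s
        rw [hg, pow_two, Finset.sum_mul_sum]
      simp_rw [expand]
      rw [swap4]
      refine Finset.sum_congr rfl fun i _ => Finset.sum_congr rfl fun j _ => ?_
      simp only [hH]
      rw [pow_two, Finset.sum_mul_sum]
      exact Finset.sum_congr rfl fun r _ => Finset.sum_congr rfl fun s _ => by ring
    have h1 : T ^ 2 ≤ ((m:ℝ)+1) * ∑ i, (H i i) ^ 2 := by
      rw [hTH]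
      have := sq_sum_le_card_mul_sum_sq (s := (Finset.univ : Finset (Fin (m+1)))) (f := fun i => H i i)
      simpa using this
    refine h1.trans ?_
    have h2 : ∑ i, (H i i) ^ 2 ≤ ∑ i, ∑ j, (H i j) ^ 2 := by
      refine Finset.sum_le_sum fun i _ => ?_
      exact Finset.single_le_sum (f := fun j => (H i j) ^ 2) (fun j _ => sq_nonneg _) (Finset.mem_univ i)
    rw [hSH]
    nlinarith [Nat.cast_nonneg (α := ℝ) m]
  -- combine: T^2 ≤ N * S
  set N : ℕ := min (m + 1) M with hN
  have hTN : T ^ 2 ≤ (N : ℝ) * S := by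
    rcases min_cases (m+1) M with ⟨h, _⟩ | ⟨h, _⟩
    · rw [hN, h]; push_cast; exact hTm
    · rw [hN, h]; exact hTM
  have hN1 : 1 ≤ N := le_min (Nat.succ_le_succ (Nat.zero_le m)) hM
  have hNpos : (0:ℝ) < (N : ℝ) := by exact_mod_cast Nat.lt_of_lt_of_le Nat.zero_lt_one hN1
  have hlpos : (0:ℝ) < (l : ℝ) := by exact_mod_cast hl
  -- final arithmetic
  have hRHS : (2 / (l:ℝ)) * (1 - 1 / (N:ℝ)) * (2 * l * T) ^ 2
      = 8 * l * (T ^ 2 - T ^ 2 / (N:ℝ)) := by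
    field_simp
    ring
  rw [hRHS]
  have : T ^ 2 / (N:ℝ) ≤ S := by
    rw [div_le_iff₀ hNpos]
    linarith [hTN]
  nlinarith
end
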